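/- Let I and X be compact metric spaces and {f_t}_{t∈I} a continuous family of continuous self-maps of X such that for some m > 0, f_t^{m+1}(X) = f_t^m(X) for all t ∈ I. For t ∈ I let Ω_t = {((x₀,t),(x₁,t),…) ∈ (X×I)^ℕ : f_t(x_{k+1}) = x_k for all k}. Then each Ω_t is a compact subset of (X×I)^ℕ (with the metric d_∞) and the map t ↦ Ω_t is continuous with respect to the Hausdorff metric on compact subsets of (X×I)^ℕ. -/

import Mathlib

/-!
`Ω_t` is the image of the closed, hence compact, set of backward `f_t`-orbits in `X^ℕ`.

For Hausdorff continuity, `d_∞` only sees the first `N + 1` coordinates up to an error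
`1/(N+1)`. Stabilization means that `f_s` maps `f_s^m(X)` onto itself, so every point of
`f_s^m(X)` starts a backward `f_s`-orbit. Given a backward `f_t`-orbit `x`, take the backward
`f_s`-orbit `y` with `y_N = f_s^m(x_{N+m})`: for `k ≤ N` we have `x_k = f_t^{N-k+m}(x_{N+m})`
and `y_k = f_s^{N-k+m}(x_{N+m})`. Finitely many iterates of a continuous family on the compact
space `X` depend on the parameter uniformly in the point, so these are close when `s` is
close to `t`.
-/

open Set Filter Topology

noncomputable def dInfty {Z : Type*} [MetricSpace Z] (z w : ℕ → Z) : ℝ :=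
  ⨆ i : ℕ, min (dist (z i) (w i)) 1 / (i + 1 : ℝ)

section BackwardOrbit

variable {α : Type*} {g : α → α}

theorem iterate_apply_of_backward_orbit {x : ℕ → α} (hx : ∀ k, g (x (k + 1)) = x k)
    (j k : ℕ) : g^[j] (x (k + j)) = x k := by
  induction j with
  | zero => rfl
  | succ j ih => rw [Function.iterate_succ_apply, ← add_assoc, hx, ih]

theorem surjOn_range_iterate {m : ℕ} (hstab : range g^[m + 1] = range g^[m]) :
    SurjOn g (range g^[m]) (range g^[m]) := by
  rintro _ hp
  rw [← hstab] at hp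
  obtain ⟨v, rfl⟩ := hp
  exact ⟨g^[m] v, mem_range_self v, (Function.iterate_succ_apply' g m v).symm⟩

theorem Set.SurjOn.exists_backward_orbit {S : Set α} (hS : SurjOn g S S) {p : α} (hp : p ∈ S) :
    ∃ x : ℕ → α, x 0 = p ∧ ∀ k, g (x (k + 1)) = x k := by
  have hpre : ∀ q : S, ∃ r : S, g r = q := fun q =>
    let ⟨r, hr, hrq⟩ := hS q.2
    ⟨⟨r, hr⟩, hrq⟩
  choose pre hpre using hpre
  exact ⟨fun k => pre^[k] ⟨p, hp⟩, rfl,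
    fun k => by simp only [Function.iterate_succ_apply', hpre]⟩

theorem Set.SurjOn.exists_backward_orbit_apply_eq {S : Set α} (hS : SurjOn g S S) {p : α}
    (hp : p ∈ S) (N : ℕ) : ∃ y : ℕ → α, y N = p ∧ ∀ k, g (y (k + 1)) = y k := by
  obtain ⟨x, hx0, hx⟩ := hS.exists_backward_orbit hp
  refine ⟨fun k => if k ≤ N then g^[N - k] p else x (k - N), by simp, fun k => ?_⟩
  dsimp only
  rcases lt_trichotomy k N with hk | rfl | hk
  · rw [if_pos hk.le, if_pos (show k + 1 ≤ N from hk), ← Function.iterate_succ_apply' g,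
      show (N - (k + 1)).succ = N - k by omega]
  · simp [hx 0, hx0]
  · rw [if_neg (by omega), if_neg hk.not_ge, show k + 1 - N = k - N + 1 by omega, hx]

theorem exists_backward_orbit_dist_lt [PseudoMetricSpace α] {h : α → α} {m N : ℕ} {ε : ℝ}
    (hstab : range h^[m + 1] = range h^[m])
    (hgh : ∀ j ≤ m + N, ∀ u, dist (g^[j] u) (h^[j] u) < ε)
    {x : ℕ → α} (hx : ∀ k, g (x (k + 1)) = x k) :
    ∃ y : ℕ → α, (∀ k, h (y (k + 1)) = y k) ∧ ∀ k ≤ N, dist (x k) (y k) < ε := by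
  obtain ⟨y, hyN, hy⟩ := (surjOn_range_iterate hstab).exists_backward_orbit_apply_eq
    (mem_range_self (x (N + m))) N
  refine ⟨y, hy, fun k hk => ?_⟩
  have hxk := iterate_apply_of_backward_orbit hx (N - k + m) k
  have hyk := iterate_apply_of_backward_orbit hy (N - k) k
  rw [show k + (N - k + m) = N + m by omega] at hxk
  rw [show k + (N - k) = N by omega, hyN, ← Function.iterate_add_apply] at hyk
  rw [← hxk, ← hyk]
  exact hgh _ (by omega) _

theorem isClosed_setOf_backward_orbit [TopologicalSpace α] [T2Space α] (hg : Continuous g) :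
    IsClosed {x : ℕ → α | ∀ k, g (x (k + 1)) = x k} := by
  simp only [ofPred_forall]
  exact isClosed_iInter fun k => isClosed_eq (hg.comp (continuous_apply _)) (continuous_apply _)

end BackwardOrbit

theorem Continuous.iterate_param {X I : Type*} [TopologicalSpace X] [TopologicalSpace I]
    {f : X × I → X} (hf : Continuous f) (j : ℕ) :
    Continuous fun p : X × I => (fun x => f (x, p.2))^[j] p.1 := by
  induction j with
  | zero => exact continuous_fst
  | succ j ih =>
    simp only [Function.iterate_succ_apply']
    exact hf.comp (ih.prodMk continuous_snd)

theorem Continuous.eventually_forall_dist_lt {X I Y : Type*} [TopologicalSpace X]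
    [CompactSpace X] [TopologicalSpace I] [PseudoMetricSpace Y] {G : X × I → Y}
    (hG : Continuous G) (t : I) {ε : ℝ} (hε : 0 < ε) :
    ∀ᶠ s in 𝓝 t, ∀ u, dist (G (u, s)) (G (u, t)) < ε := by
  let F : C(I, C(X, Y)) := (ContinuousMap.mk (G ∘ Prod.swap) (hG.comp continuous_swap)).curry
  filter_upwards [(F.continuous.tendsto t).eventually (Metric.ball_mem_nhds (F t) hε)]
    with s hs u
  exact (ContinuousMap.dist_apply_le_dist u).trans_lt hs

theorem dInfty_le_of_forall_dist_le {Z : Type*} [MetricSpace Z] {z w : ℕ → Z} {ε : ℝ} {N : ℕ}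
    (hN : 1 / (N + 1 : ℝ) ≤ ε) (h : ∀ i ≤ N, dist (z i) (w i) ≤ ε) : dInfty z w ≤ ε := by
  refine ciSup_le fun i => ?_
  rcases le_or_gt i N with hiN | hNi
  · calc min (dist (z i) (w i)) 1 / (i + 1 : ℝ) ≤ min (dist (z i) (w i)) 1 :=
          div_le_self (le_min dist_nonneg zero_le_one) (by simp)
      _ ≤ ε := (min_le_left _ _).trans (h i hiN)
  · calc min (dist (z i) (w i)) 1 / (i + 1 : ℝ) ≤ 1 / (N + 1 : ℝ) := by
          gcongr
          exact min_le_right _ _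
      _ ≤ ε := hN

theorem omega_t_compact_and_hausdorff_continuous_general {X I : Type*}
    [MetricSpace X] [CompactSpace X] [MetricSpace I]
    (f : X × I → X) (hf : Continuous f)
    (m : ℕ)
    (hstab : ∀ t : I, Set.range ((fun x => f (x, t))^[m + 1])
        = Set.range ((fun x => f (x, t))^[m]))
    (Ω : I → Set (ℕ → X × I))
    (hΩ : ∀ t : I, Ω t = {z | ∃ x : ℕ → X,
        (∀ k, z k = (x k, t)) ∧ ∀ k, f (x (k + 1), t) = x k}) :
    (∀ t : I, IsCompact (Ω t)) ∧
    (∀ t : I, ∀ δ > (0 : ℝ), ∃ η > (0 : ℝ), ∀ s : I, dist s t < η →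
        (∀ z ∈ Ω t, ∃ w ∈ Ω s, dInfty z w < δ) ∧
        (∀ w ∈ Ω s, ∃ z ∈ Ω t, dInfty z w < δ)) := by
  have hΩ_image : ∀ t,
      Ω t = (fun x k => (x k, t)) '' {x : ℕ → X | ∀ k, f (x (k + 1), t) = x k} := fun t => by
    rw [hΩ t]
    ext z
    simp only [mem_ofPred_eq, mem_image, funext_iff, eq_comm (a := z _), and_comm]
  refine ⟨fun t => ?_, fun t δ hδ => ?_⟩
  · rw [hΩ_image]
    exact (isClosed_setOf_backward_orbit (g := fun x => f (x, t)) (by fun_prop)).isCompact.image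
      (by fun_prop)
  obtain ⟨N, hN⟩ := exists_nat_one_div_lt (half_pos hδ)
  have hnear : ∀ᶠ s in 𝓝 t, dist s t < δ / 2 ∧ ∀ j ∈ Iic (m + N), ∀ u,
      dist ((fun x => f (x, s))^[j] u) ((fun x => f (x, t))^[j] u) < δ / 2 :=
    Eventually.and (Metric.ball_mem_nhds t (half_pos hδ)) <|
      (eventually_all_finite (finite_Iic _)).2 fun j _ => (hf.iterate_param j).eventually_forall_dist_lt t (half_pos hδ)
  obtain ⟨η, hη, hη_near⟩ := Metric.eventually_nhds_iff.1 hnear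
  refine ⟨η, hη, fun s hsη => ?_⟩
  obtain ⟨hst, hiter⟩ := hη_near hsη
  have hdInfty : ∀ x y : ℕ → X, (∀ k ≤ N, dist (x k) (y k) < δ / 2) →
      dInfty (fun k => (x k, t)) (fun k => (y k, s)) < δ := fun x y hxy =>
    (dInfty_le_of_forall_dist_le hN.le fun k hk => by
      rw [Prod.dist_eq, dist_comm t]
      exact max_le (hxy k hk).le hst.le).trans_lt (half_lt_self hδ)
  rw [hΩ_image, hΩ_image]
  constructor
  · rintro _ ⟨x, hx, rfl⟩
    obtain ⟨y, hy, hxy⟩ := exists_backward_orbit_dist_lt (g := fun x => f (x, t)) (hstab s)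
      (fun j hj u => dist_comm (α := X) _ _ ▸ hiter j hj u) hx
    exact ⟨_, ⟨y, hy, rfl⟩, hdInfty x y hxy⟩
  · rintro _ ⟨y, hy, rfl⟩
    obtain ⟨x, hx, hyx⟩ := exists_backward_orbit_dist_lt (hstab t) hiter hy
    exact ⟨_, ⟨x, hx, rfl⟩, hdInfty x y fun k hk => dist_comm (x k) (y k) ▸ hyx k hk⟩

/-- For a continuous family `{f_t}_{t∈I}` of continuous self-maps of a compact metric
space `X` (with `I` compact metric) which stabilizes uniformly at some iterate `m > 0`,
the sets `Ω_t = {((x₀,t),(x₁,t),…) : f_t (x_{k+1}) = x_k for all k} ⊆ (X×I)^ℕ` are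
compact, and `t ↦ Ω_t` is continuous in the Hausdorff metric induced by `d_∞`:
for every `t` and `δ > 0` there is `η > 0` such that whenever `dist s t < η`, each point
of `Ω_t` is `δ`-close to a point of `Ω_s` and vice versa. -/
theorem omega_t_compact_and_hausdorff_continuous {X I : Type*}
    [MetricSpace X] [CompactSpace X] [MetricSpace I] [CompactSpace I]
    (f : X × I → X) (hf : Continuous f)
    (m : ℕ) (hm : 0 < m)
    (hstab : ∀ t : I, Set.range ((fun x => f (x, t))^[m + 1])
        = Set.range ((fun x => f (x, t))^[m]))
    (Ω : I → Set (ℕ → X × I))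
    (hΩ : ∀ t : I, Ω t = {z | ∃ x : ℕ → X,
        (∀ k, z k = (x k, t)) ∧ ∀ k, f (x (k + 1), t) = x k}) :
    (∀ t : I, IsCompact (Ω t)) ∧
    (∀ t : I, ∀ δ > (0 : ℝ), ∃ η > (0 : ℝ), ∀ s : I, dist s t < η →
        (∀ z ∈ Ω t, ∃ w ∈ Ω s, dInfty z w < δ) ∧
        (∀ w ∈ Ω s, ∃ z ∈ Ω t, dInfty z w < δ)) :=
  omega_t_compact_and_hausdorff_continuous_general f hf m hstab Ω hΩ
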